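/- Let p be a prime with p ≡ 1 (mod 4). Then G_p(p) = ∑_{a=1}^{p-1} ∑_{b=1}^{p-1} (a+bi)^p satisfies G_p(p) ≡ p²(1+i) (mod p³) in ℤ[i]. Equivalently, v_p(G_p(p)) = 2 and G_p(p)/p² ≡ 1+i (mod p). -/

import Mathlib

noncomputable section

/-- `i` in the Gaussian integers. -/
def Ig : GaussianInt := ⟨0, 1⟩

/-- Classical power sum `S_r(N) = ∑_{t=1}^N t^r`. -/
def Sps (r N : ℕ) : ℤ := ∑ t ∈ Finset.Icc 1 N, (t : ℤ) ^ r

/-- Gaussian power sum `F_n(k,m) = ∑_{a=1}^k ∑_{b=1}^m (a+bi)^n`. -/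
def Fg (n k m : ℕ) : GaussianInt :=
  ∑ a ∈ Finset.Icc 1 k, ∑ b ∈ Finset.Icc 1 m, ((a : GaussianInt) + (b : GaussianInt) * Ig) ^ n

/-- Square Gaussian power sum `G_n(N) = F_n(N-1,N-1)`. -/
def Gg (n N : ℕ) : GaussianInt := Fg n (N - 1) (N - 1)


/-!
Expand `(a + b i)^p` binomially and sum: with `S_r = ∑_{t=1}^{p-1} t^r`,
`G_p(p) = ∑_k C(p,k) S_k S_{p-k} i^{p-k}`. For `2 ≤ k ≤ p - 2` each of `C(p,k)`, `S_k` and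
`S_{p-k}` is divisible by `p`, so modulo `p³` only `k ∈ {0, 1, p-1, p}` survive, and as
`i^{p-1} = 1` these give `(1 + i) M` with `M = (p-1) S_p + p S_1 S_{p-1}`. Pairing `t` with
`p - t` shows `2 S_p ≡ p² S_{p-1} (mod p³)`; together with `S_{p-1} ≡ -1 (mod p)` and
`2 S_1 = p(p-1)` this gives `M ≡ p² (mod p³)`.
-/

open Finset

lemma sum_zmod_eq_sum_range {p : ℕ} [NeZero p] {M : Type*} [AddCommMonoid M] (f : ZMod p → M) :
    ∑ x : ZMod p, f x = ∑ i ∈ range p, f i :=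
  sum_nbij' (fun x => x.val) (fun i => (i : ZMod p)) (by simp [ZMod.val_lt])
    (by simp) (by simp) (fun i hi => by simp [Nat.mod_eq_of_lt (mem_range.mp hi)]) (by simp)

lemma Sps_zero (N : ℕ) : Sps 0 N = N := by simp [Sps]

lemma Sps_eq_sum_range {r : ℕ} (hr : r ≠ 0) (N : ℕ) :
    Sps r N = ∑ t ∈ range (N + 1), (t : ℤ) ^ r := by
  rw [range_eq_Ico, sum_eq_sum_Ico_succ_bot N.succ_pos]
  simp [Sps, zero_pow hr, ← Ico_add_one_right_eq_Icc]

lemma two_mul_Sps_one (N : ℕ) : 2 * Sps 1 N = N * (N + 1) := by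
  have hgauss : 2 * ∑ i ∈ range (N + 1), i = N * (N + 1) := by
    rw [mul_comm, sum_range_id_mul_two, Nat.add_sub_cancel, mul_comm]
  rw [Sps_eq_sum_range one_ne_zero]
  simpa using congrArg (Nat.cast : ℕ → ℤ) hgauss

section PowerSumsModPrime

variable {p : ℕ} [hp : Fact p.Prime]

lemma intCast_Sps_eq_sum_zmod {r : ℕ} (hr : r ≠ 0) :
    (Sps r (p - 1) : ZMod p) = ∑ x : ZMod p, x ^ r := by
  rw [Sps_eq_sum_range hr, sum_zmod_eq_sum_range, Nat.sub_add_cancel hp.out.one_le]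
  push_cast
  rfl

lemma prime_dvd_Sps {r : ℕ} (hr : r ≠ 0) (hrp : r < p - 1) : (p : ℤ) ∣ Sps r (p - 1) := by
  rw [← ZMod.intCast_zmod_eq_zero_iff_dvd, intCast_Sps_eq_sum_zmod hr]
  exact FiniteField.sum_pow_lt_card_sub_one (ZMod p) r (by rwa [ZMod.card])

lemma intCast_Sps_sub_one : (Sps (p - 1) (p - 1) : ZMod p) = -1 := by
  have hfermat : ∀ t ∈ Icc 1 (p - 1), ((t : ℤ) : ZMod p) ^ (p - 1) = 1 := by
    intro t ht
    have ht := mem_Icc.mp ht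
    refine ZMod.pow_card_sub_one_eq_one ?_
    rw [Int.cast_natCast, ne_eq, ZMod.natCast_eq_zero_iff]
    exact fun h => by have := Nat.le_of_dvd (by omega) h; omega
  rw [Sps, Int.cast_sum]
  simp only [Int.cast_pow]
  rw [sum_congr rfl hfermat]
  simp [Nat.cast_sub hp.out.one_le]

end PowerSumsModPrime

/-- The integer `M`: the terms `k = 0, p` of the expansion of `G_p(p)` contribute
`(1 + i) (p - 1) S_p`, the terms `k = 1, p - 1` contribute `(1 + i) p S_1 S_{p-1}`. -/
def boundaryCoeff (p : ℕ) : ℤ :=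
  (p - 1) * Sps p (p - 1) + p * Sps 1 (p - 1) * Sps (p - 1) (p - 1)

section OddPrime

variable {p : ℕ}

/-- In the binomial expansion of `(p - t)^p` the terms beyond the linear one carry
`p^2 * C(p,2)` or a power `p^m` with `m ≥ 3`. -/
lemma cube_dvd_sub_pow_add_pow_sub (hp : p.Prime) (hp2 : p ≠ 2) (t : ℤ) :
    (p : ℤ) ^ 3 ∣ (p - t) ^ p + t ^ p - p ^ 2 * t ^ (p - 1) := by
  have hodd := hp.odd_of_ne_two hp2
  have heven : Even (p - 1) := Nat.Odd.sub_odd hodd odd_one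
  have hp3 : 3 ≤ p := by have := hp.two_le; omega
  have hterm : ∀ j ∈ range (p - 1),
      (p : ℤ) ^ 3 ∣ p ^ (j + 2) * (-t) ^ (p - (j + 2)) * p.choose (j + 2) := by
    intro j _
    rcases j with _ | j
    · obtain ⟨c, hc⟩ := hp.dvd_choose_self two_ne_zero (by omega)
      exact ⟨(-t) ^ (p - 2) * c, by rw [hc]; push_cast; ring⟩
    · exact dvd_mul_of_dvd_left (dvd_mul_of_dvd_left (pow_dvd_pow _ (by omega)) _) _
  have hexpand : ((p : ℤ) - t) ^ p = ∑ j ∈ range (p - 1),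
      (p : ℤ) ^ (j + 2) * (-t) ^ (p - (j + 2)) * p.choose (j + 2)
        + p ^ 2 * t ^ (p - 1) - t ^ p := by
    rw [sub_eq_add_neg, add_pow, show p + 1 = p - 1 + 1 + 1 by omega, sum_range_succ',
      sum_range_succ']
    simp [hodd.neg_pow, heven.neg_pow]
    ring
  rw [hexpand, sub_add_cancel, add_sub_cancel_right]
  exact dvd_sum hterm

lemma cube_dvd_two_mul_Sps_sub (hp : p.Prime) (hp2 : p ≠ 2) :
    (p : ℤ) ^ 3 ∣ 2 * Sps p (p - 1) - p ^ 2 * Sps (p - 1) (p - 1) := by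
  have hreflect : ∑ t ∈ Icc 1 (p - 1), ((p : ℤ) - t) ^ p = Sps p (p - 1) := by
    refine sum_nbij' (fun t => p - t) (fun t => p - t) ?_ ?_ ?_ ?_ ?_ <;>
      simp only [mem_Icc] <;> intro t ht
    any_goals omega
    rw [Nat.cast_sub (by omega : t ≤ p)]
  have hsum : 2 * Sps p (p - 1) - p ^ 2 * Sps (p - 1) (p - 1) = ∑ t ∈ Icc 1 (p - 1),
      (((p : ℤ) - t) ^ p + (t : ℤ) ^ p - p ^ 2 * (t : ℤ) ^ (p - 1)) := by
    rw [sum_sub_distrib, sum_add_distrib, hreflect, ← mul_sum]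
    unfold Sps
    ring
  rw [hsum]
  exact dvd_sum fun t _ => cube_dvd_sub_pow_add_pow_sub hp hp2 t

/-- `2 M = (p - 1) (2 S_p) + p S_{p-1} (2 S_1) ≡ 2 p² (p - 1) S_{p-1} ≡ 2 p² (mod p³)`,
and `2` is invertible modulo `p³`. -/
lemma cube_dvd_boundaryCoeff_sub (hp : p.Prime) (hp2 : p ≠ 2) :
    (p : ℤ) ^ 3 ∣ boundaryCoeff p - p ^ 2 := by
  have : Fact p.Prime := ⟨hp⟩
  obtain ⟨d, hd⟩ := cube_dvd_two_mul_Sps_sub hp hp2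
  have hgauss : 2 * Sps 1 (p - 1) = p * (p - 1) := by
    rw [two_mul_Sps_one, Nat.cast_sub hp.one_le]
    push_cast
    ring
  obtain ⟨e, he⟩ : (p : ℤ) ∣ Sps (p - 1) (p - 1) + 1 := by
    rw [← ZMod.intCast_zmod_eq_zero_iff_dvd]
    push_cast [intCast_Sps_sub_one]
    ring
  have hcop : IsCoprime ((p : ℤ) ^ 3) 2 := by
    refine IsCoprime.pow_left ?_
    rw [Int.isCoprime_iff_gcd_eq_one]
    exact (Nat.coprime_primes hp Nat.prime_two).mpr hp2
  refine hcop.dvd_of_dvd_mul_left ⟨2 * (p - 1) * e - 2 + (p - 1) * d, ?_⟩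
  rw [boundaryCoeff]
  linear_combination ((p : ℤ) - 1) * hd + (p : ℤ) * Sps (p - 1) (p - 1) * hgauss
      + 2 * (p : ℤ) ^ 2 * ((p : ℤ) - 1) * he

end OddPrime

lemma cube_dvd_choose_mul_Sps_mul_Sps {p k : ℕ} (hp : p.Prime) (hk2 : 2 ≤ k)
    (hkp : k + 2 ≤ p) :
    (p : ℤ) ^ 3 ∣ p.choose k * Sps k (p - 1) * Sps (p - k) (p - 1) := by
  have : Fact p.Prime := ⟨hp⟩
  have hchoose : (p : ℤ) ∣ p.choose k :=
    Int.natCast_dvd_natCast.mpr (hp.dvd_choose_self (by omega) (by omega))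
  rw [pow_succ, pow_two]
  exact mul_dvd_mul (mul_dvd_mul hchoose (prime_dvd_Sps (by omega) (by omega)))
    (prime_dvd_Sps (by omega) (by omega))

lemma Ig_pow_four : Ig ^ 4 = 1 := by
  rw [show Ig ^ 4 = (Zsqrtd.sqrtd * Zsqrtd.sqrtd) ^ 2 by rw [← sq, ← pow_mul]; rfl,
    Zsqrtd.dmuld]
  norm_num

lemma Fg_eq_sum_choose (n k m : ℕ) :
    Fg n k m = ∑ j ∈ range (n + 1),
      ((n.choose j * Sps j k * Sps (n - j) m : ℤ) : GaussianInt) * Ig ^ (n - j) := by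
  simp only [Fg, Sps, add_pow, mul_pow, Int.cast_mul, Int.cast_sum, Int.cast_pow,
    Int.cast_natCast, sum_mul, mul_sum]
  refine ((sum_congr rfl fun a _ => sum_comm).trans
    (sum_comm.trans (sum_congr rfl fun j _ => sum_comm))).trans ?_
  exact sum_congr rfl fun j _ => sum_congr rfl fun b _ => sum_congr rfl fun a _ => by ring

lemma cube_dvd_Gg_sub_boundaryCoeff {p : ℕ} (hp : p.Prime) (h1 : p % 4 = 1) :
    (p : GaussianInt) ^ 3 ∣ Gg p p - (1 + Ig) * (boundaryCoeff p : GaussianInt) := by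
  have hp5 : 5 ≤ p := by have := hp.two_le; omega
  have hIp1 : Ig ^ (p - 1) = 1 := by
    obtain ⟨m, hm⟩ : 4 ∣ p - 1 := by omega
    rw [hm, pow_mul, Ig_pow_four, one_pow]
  have hIp : Ig ^ p = Ig := by
    rw [← Nat.sub_add_cancel hp.one_le, pow_succ, hIp1, one_mul]
  have hends : ({0, 1, p - 1, p} : Finset ℕ) ⊆ range (p + 1) := by
    intro k hk
    simp only [mem_insert, mem_singleton] at hk
    rw [mem_range]
    omega
  have hmiddle : (p : GaussianInt) ^ 3 ∣ ∑ k ∈ range (p + 1) \ {0, 1, p - 1, p},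
      ((p.choose k * Sps k (p - 1) * Sps (p - k) (p - 1) : ℤ) : GaussianInt) * Ig ^ (p - k) := by
    refine dvd_sum fun k hk => Dvd.dvd.mul_right ?_ _
    simp only [mem_sdiff, mem_range, mem_insert, mem_singleton] at hk
    exact_mod_cast Int.cast_dvd_cast _ _
      (cube_dvd_choose_mul_Sps_mul_Sps hp (k := k) (by omega) (by omega))
  have hzero : 0 ∉ ({1, p - 1, p} : Finset ℕ) := by simp; omega
  have hone : 1 ∉ ({p - 1, p} : Finset ℕ) := by simp; omega
  have hpred : p - 1 ∉ ({p} : Finset ℕ) := by simp; omega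
  rw [Gg, Fg_eq_sum_choose, ← sum_sdiff hends, sum_insert hzero, sum_insert hone,
    sum_insert hpred, sum_singleton, add_sub_assoc]
  refine dvd_add hmiddle ((dvd_zero _).trans (dvd_of_eq ?_))
  simp only [Nat.sub_zero, Nat.sub_self, Nat.sub_sub_self hp.one_le, Nat.choose_zero_right,
    Nat.choose_one_right, Nat.choose_self, Nat.choose_symm hp.one_le, Sps_zero, hIp, hIp1, pow_zero,
    boundaryCoeff]
  push_cast [Nat.cast_sub hp.one_le]
  ring

lemma padicValInt_eq_of_pow_succ_dvd_sub {p : ℕ} [hp : Fact p.Prime] {a : ℤ} {k : ℕ}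
    (h : (p : ℤ) ^ (k + 1) ∣ a - p ^ k) : padicValInt p a = k := by
  obtain ⟨x, hx⟩ := h
  have hunit : ¬(p : ℤ) ∣ 1 + p * x := fun hdvd =>
    (Nat.prime_iff_prime_int.mp hp.out).not_dvd_one ((dvd_add_left (dvd_mul_right _ _)).mp hdvd)
  have hne : 1 + (p : ℤ) * x ≠ 0 := fun h0 => hunit (h0 ▸ dvd_zero _)
  rw [show a = p ^ k * (1 + p * x) by linear_combination hx,
    padicValInt.mul (pow_ne_zero k (by exact_mod_cast hp.out.ne_zero)) hne,
    padicValInt.eq_zero_of_not_dvd hunit, add_zero, ← Nat.cast_pow, padicValInt.of_nat,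
    padicValNat.prime_pow]

theorem stmt14 (p : ℕ) (hp : p.Prime) (h1 : p % 4 = 1) :
    (p : GaussianInt) ^ 3 ∣ (Gg p p - (p : GaussianInt) ^ 2 * (1 + Ig)) ∧
    min (padicValInt p (Gg p p).re) (padicValInt p (Gg p p).im) = 2 := by
  have : Fact p.Prime := ⟨hp⟩
  have hboundary : (p : GaussianInt) ^ 3 ∣ (boundaryCoeff p : GaussianInt) - p ^ 2 := by
    exact_mod_cast Int.cast_dvd_cast _ _ (cube_dvd_boundaryCoeff_sub hp (by omega))
  have hdvd : (p : GaussianInt) ^ 3 ∣ Gg p p - p ^ 2 * (1 + Ig) := by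
    convert (cube_dvd_Gg_sub_boundaryCoeff hp h1).add (hboundary.mul_left (1 + Ig)) using 1
    ring
  refine ⟨hdvd, ?_⟩
  have hsq : (p : GaussianInt) ^ 2 * (1 + Ig) = ⟨p ^ 2, p ^ 2⟩ := by ext <;> simp [Ig, sq]
  rw [hsq, ← Int.cast_natCast, ← Int.cast_pow, Zsqrtd.intCast_dvd] at hdvd
  rw [padicValInt_eq_of_pow_succ_dvd_sub hdvd.1, padicValInt_eq_of_pow_succ_dvd_sub hdvd.2,
    min_self]
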